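/- arXiv:2004.12142 — 2 statements merged into one kernel-verified Lean document; each statement's English description precedes it below -/
import Mathlib

section
/- For every integer n ≥ 0, every integer r ≥ 1 and every real number x, Σ_{k=0}^{n} S_{J,λ}^{(2)}(n,k)·C_k^{(r)}(x) = Σ_{k=0}^{n} binom(n,k)·(Σ_{l=0}^{k} E_{l,λ}^{(r)}·S_{2,λ}(k,l))·B_{n−k,λ}(x), where binom(n,k) is the ordinary binomial coefficient. -/
open Finset PowerSeries

/-- degenerate falling factorial `(x)_{n,λ}`; `dff 1 x n` is the ordinary falling factorial. -/
noncomputable def dff (lam x : ℝ) (n : ℕ) : ℝ := ∏ i ∈ Finset.range n, (x - (i : ℝ) * lam)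

/-- `(1)_{n,1/λ} = ∏_{i<n} (1 - i/λ)`. -/
noncomputable def oneFall (lam : ℝ) (n : ℕ) : ℝ := ∏ i ∈ Finset.range n, (1 - (i : ℝ) / lam)

/-- degenerate exponential `e_λ^x(t)` as a formal power series. -/
noncomputable def degExp (lam x : ℝ) : PowerSeries ℝ :=
  PowerSeries.mk fun n => dff lam x n / n.factorial

/-- `(1+t)^y = Σ_{n≥0} (y)_n t^n/n!`. -/
noncomputable def onePlus (y : ℝ) : PowerSeries ℝ :=
  PowerSeries.mk fun n => dff 1 y n / n.factorial

/-- `(1-t)^y = Σ_{n≥0} (y)_n (-1)^n t^n/n!`. -/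
noncomputable def oneMinus (y : ℝ) : PowerSeries ℝ :=
  PowerSeries.mk fun n => dff 1 y n * (-1) ^ n / n.factorial

/-- `log_λ(1+t) = Σ_{n≥1} λ^{n-1} (1)_{n,1/λ} t^n/n!`. -/
noncomputable def degLog (lam : ℝ) : PowerSeries ℝ :=
  PowerSeries.mk fun n => if n = 0 then 0 else lam ^ (n - 1) * oneFall lam n / n.factorial

/-- `log_λ(1-t) = Σ_{n≥1} λ^{n-1} (1)_{n,1/λ} (-1)^n t^n/n!`. -/
noncomputable def degLogNeg (lam : ℝ) : PowerSeries ℝ :=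
  PowerSeries.mk fun n =>
    if n = 0 then 0 else lam ^ (n - 1) * oneFall lam n * (-1) ^ n / n.factorial

/-- composition `f(g(t))` of formal power series (the usual composition when the
constant term of `g` is zero). -/
noncomputable def pcomp (f g : PowerSeries ℝ) : PowerSeries ℝ :=
  PowerSeries.mk fun n =>
    ∑ k ∈ Finset.range (n + 1), (PowerSeries.coeff k f) * (PowerSeries.coeff n (g ^ k))

/-!
Put `g = e_λ(t) - 1`. Coefficientwise both sides of `(1 + g)^y = e_λ^y(t)` are polynomials in `y`
which agree at every natural `y`, so the binomial series composed with `g` is the degenerate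
exponential; composing once more, `(1 + h)^y = e_λ^y(g)` for `h = e_λ(g) - 1`. Hence the
left-hand side is `n!` times the `n`-th coefficient of the Changhee series at `h`, namely of
`2^r e_λ^{x+r}(g) / (e_λ(g)^2 + 1)^r`. As `e_λ(g) e_λ^{-1}(g) = 1`, this is
`2^r / (e_λ(g) + e_λ^{-1}(g))^r · e_λ^x(g)`, the Euler series at `g` times the Bell series.
Its coefficients are read off from `S_{2,λ}(k,l) = k!/l! [t^k] g^l`, which is again the
identity `e_λ^y(t) = (1 + g)^y`, compared in the basis of falling factorials.
-/

lemma dff_one_eq_eval_descPochhammer (y : ℝ) (n : ℕ) :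
    dff 1 y n = (descPochhammer ℝ n).eval y := by
  simp [dff, descPochhammer_eval_eq_prod_range]

lemma dff_eq_pow_mul_dff_one {lam : ℝ} (hlam : lam ≠ 0) (x : ℝ) (n : ℕ) :
    dff lam x n = lam ^ n * dff 1 (x / lam) n := by
  rw [dff, dff, pow_eq_prod_const, ← Finset.prod_mul_distrib]
  refine Finset.prod_congr rfl fun i _ => ?_
  field_simp

lemma coeff_degExp (lam x : ℝ) (n : ℕ) :
    coeff n (degExp lam x) = dff lam x n / n.factorial :=
  coeff_mk _ _

lemma coeff_onePlus (y : ℝ) (n : ℕ) : coeff n (onePlus y) = dff 1 y n / n.factorial :=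
  coeff_mk _ _

lemma constantCoeff_degExp (lam x : ℝ) : constantCoeff (degExp lam x) = 1 := by
  simp [degExp, dff]

lemma onePlus_eq_binomialSeries (y : ℝ) : onePlus y = PowerSeries.binomialSeries ℝ y := by
  ext n
  rw [coeff_onePlus, binomialSeries_coeff, Ring.choose_eq_smul, smul_eq_mul, smul_eq_mul,
    mul_one, dff_one_eq_eval_descPochhammer, ← descPochhammer_map (algebraMap ℤ ℝ),
    Polynomial.eval_map_algebraMap, Polynomial.aeval_eq_smeval]
  ring

lemma degExp_eq_rescale_onePlus {lam : ℝ} (hlam : lam ≠ 0) (x : ℝ) :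
    degExp lam x = rescale lam (onePlus (x / lam)) := by
  ext n
  rw [coeff_degExp, coeff_rescale, coeff_onePlus, dff_eq_pow_mul_dff_one hlam, mul_div_assoc]

lemma degExp_add {lam : ℝ} (hlam : lam ≠ 0) (a b : ℝ) :
    degExp lam (a + b) = degExp lam a * degExp lam b := by
  simp only [degExp_eq_rescale_onePlus hlam, onePlus_eq_binomialSeries, add_div,
    binomialSeries_add, map_mul]

lemma degExp_zero (lam : ℝ) : degExp lam 0 = 1 := by
  ext n
  cases n <;> simp [degExp, dff, Finset.prod_range_succ']

lemma degExp_natCast {lam : ℝ} (hlam : lam ≠ 0) (m : ℕ) :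
    degExp lam m = degExp lam 1 ^ m := by
  induction m with
  | zero => simp [degExp_zero]
  | succ m ih => rw [Nat.cast_succ, degExp_add hlam, ih, pow_succ]

lemma constantCoeff_degExp_sub_one (lam : ℝ) : constantCoeff (degExp lam 1 - 1) = 0 := by
  simp [constantCoeff_degExp]

lemma coeff_subst_eq_sum_range {g : ℝ⟦X⟧} (hg : constantCoeff g = 0) (f : ℝ⟦X⟧) (n : ℕ) :
    coeff n (f.subst g) = ∑ k ∈ range (n + 1), coeff k f * coeff n (g ^ k) := by
  rw [coeff_subst' (HasSubst.of_constantCoeff_zero' hg)]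
  refine finsum_eq_sum_of_support_subset _ fun k hk => ?_
  rw [Finset.coe_range, Set.mem_Iio, Nat.lt_succ_iff]
  by_contra! hnk
  refine hk (mul_eq_zero_of_right _ (coeff_of_lt_order n ?_))
  exact (le_order_pow_of_constantCoeff_eq_zero k hg).trans_lt' (by exact_mod_cast hnk)

lemma constantCoeff_subst_of_constantCoeff_eq_zero {g : ℝ⟦X⟧} (hg : constantCoeff g = 0)
    (f : ℝ⟦X⟧) :
    constantCoeff (f.subst g) = constantCoeff f := by
  rw [← coeff_zero_eq_constantCoeff_apply, ← coeff_zero_eq_constantCoeff_apply,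
    coeff_subst_eq_sum_range hg]
  simp

lemma constantCoeff_subst_degExp_one_sub_one (lam : ℝ) {g : ℝ⟦X⟧} (hg : constantCoeff g = 0) :
    constantCoeff ((degExp lam 1).subst g - 1) = 0 := by
  rw [map_sub, constantCoeff_subst_of_constantCoeff_eq_zero hg, constantCoeff_degExp, map_one,
    sub_self]

lemma pcomp_eq_subst {g : ℝ⟦X⟧} (hg : constantCoeff g = 0) (f : ℝ⟦X⟧) :
    pcomp f g = f.subst g := by
  ext n
  rw [pcomp, coeff_mk, coeff_subst_eq_sum_range hg]

lemma subst_onePlus_natCast {u : ℝ⟦X⟧} (hu : constantCoeff u = 0) (m : ℕ) :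
    (onePlus m).subst u = (1 + u) ^ m := by
  rw [onePlus_eq_binomialSeries, binomialSeries_nat,
    ← coe_substAlgHom (HasSubst.of_constantCoeff_zero' hu), map_pow, map_add, map_one,
    coe_substAlgHom, subst_X (HasSubst.of_constantCoeff_zero' hu)]

noncomputable def polyFunctions : Subalgebra ℝ (ℝ → ℝ) := (Polynomial.aeval (id : ℝ → ℝ)).range

lemma dff_mem_polyFunctions (mu : ℝ) (n : ℕ) : (fun y => dff mu y n) ∈ polyFunctions :=
  ⟨∏ i ∈ range n, (Polynomial.X - Polynomial.C ((i : ℝ) * mu)), by ext y; simp [dff]⟩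

lemma eq_of_forall_natCast_eq {f g : ℝ → ℝ} (hf : f ∈ polyFunctions) (hg : g ∈ polyFunctions)
    (h : ∀ m : ℕ, f m = g m) : f = g := by
  obtain ⟨P, hP⟩ := sub_mem hf hg
  have hP0 : P = 0 := by
    refine Polynomial.eq_zero_of_infinite_isRoot P (Set.infinite_of_injective_forall_mem
      Nat.cast_injective fun m => ?_)
    simpa [Polynomial.aeval_fn_apply, h m] using congrFun hP m
  rw [hP0, map_zero] at hP
  exact sub_eq_zero.1 hP.symm

lemma subst_onePlus_degExp_sub_one {lam : ℝ} (hlam : lam ≠ 0) (y : ℝ) :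
    (onePlus y).subst (degExp lam 1 - 1) = degExp lam y := by
  set u := degExp lam 1 - 1
  have hu : constantCoeff u = 0 := constantCoeff_degExp_sub_one lam
  ext n
  have hsubst : (fun y => coeff n ((onePlus y).subst u)) =
      ∑ k ∈ range (n + 1), (coeff n (u ^ k) / k.factorial) • fun y => dff 1 y k := by
    ext y
    simp only [coeff_subst_eq_sum_range hu, coeff_onePlus, Finset.sum_apply, Pi.smul_apply,
      smul_eq_mul]
    exact Finset.sum_congr rfl fun k _ => by ring
  have hdegExp : (fun y => coeff n (degExp lam y)) =
      (n.factorial : ℝ)⁻¹ • fun y => dff lam y n := by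
    ext y
    simp [coeff_degExp, div_eq_inv_mul]
  refine congrFun (eq_of_forall_natCast_eq (f := fun y => coeff n ((onePlus y).subst u))
    (g := fun y => coeff n (degExp lam y)) ?_ ?_ fun m => ?_) y
  · rw [hsubst]
    exact sum_mem fun k _ => Subalgebra.smul_mem _ (dff_mem_polyFunctions 1 k) _
  · rw [hdegExp]
    exact Subalgebra.smul_mem _ (dff_mem_polyFunctions lam n) _
  · simp only [subst_onePlus_natCast hu, u, add_sub_cancel, degExp_natCast hlam]

lemma subst_onePlus_subst_degExp_sub_one {lam : ℝ} (hlam : lam ≠ 0) {g : ℝ⟦X⟧}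
    (hg : constantCoeff g = 0) (y : ℝ) :
    (onePlus y).subst ((degExp lam 1).subst g - 1) = (degExp lam y).subst g := by
  have hg' := HasSubst.of_constantCoeff_zero' hg
  have hsub : (degExp lam 1).subst g - 1 = (degExp lam 1 - 1).subst g := by
    rw [← coe_substAlgHom hg', map_sub, map_one]
  rw [hsub, ← subst_comp_subst_apply
    (HasSubst.of_constantCoeff_zero' (constantCoeff_degExp_sub_one lam)) hg',
    subst_onePlus_degExp_sub_one hlam]

noncomputable def descPochhammerSequence : Polynomial.Sequence ℝ where
  elems' := descPochhammer ℝ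
  degree_eq' n := by
    rw [Polynomial.degree_eq_natDegree (monic_descPochhammer ℝ n).ne_zero,
      descPochhammer_natDegree]

lemma eq_of_sum_mul_dff_one_eq {N : ℕ} {a b : ℕ → ℝ}
    (h : ∀ y, ∑ l ∈ range N, a l * dff 1 y l = ∑ l ∈ range N, b l * dff 1 y l) :
    ∀ l < N, a l = b l := by
  have hpoly : ∑ l ∈ range N, (a l - b l) • descPochhammerSequence l = 0 := by
    refine Polynomial.funext fun y => ?_
    simpa [descPochhammerSequence, Polynomial.eval_finsetSum, sub_mul,
      ← dff_one_eq_eval_descPochhammer, sub_eq_zero] using h y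
  intro l hl
  exact sub_eq_zero.1 (linearIndependent_iff'.1 descPochhammerSequence.linearIndependent _ _
    hpoly l (mem_range.2 hl))

lemma degStirling_eq_factorial_mul_coeff {lam : ℝ} (hlam : lam ≠ 0) {S2 : ℕ → ℕ → ℝ} {k : ℕ}
    (hS2 : ∀ x, dff lam x k = ∑ l ∈ range (k + 1), S2 k l * dff 1 x l) {l : ℕ} (hl : l ≤ k) :
    S2 k l = k.factorial * coeff k ((l.factorial : ℝ)⁻¹ • (degExp lam 1 - 1) ^ l) := by
  refine eq_of_sum_mul_dff_one_eq (a := S2 k)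
    (b := fun l => k.factorial * coeff k ((l.factorial : ℝ)⁻¹ • (degExp lam 1 - 1) ^ l))
    (fun y => ?_) l (Nat.lt_succ_of_le hl)
  have hcoeff := congrArg (coeff k) (subst_onePlus_degExp_sub_one hlam y)
  rw [coeff_subst_eq_sum_range (constantCoeff_degExp_sub_one lam), coeff_degExp,
    eq_div_iff (by positivity)] at hcoeff
  rw [← hS2, ← hcoeff, Finset.sum_mul]
  refine Finset.sum_congr rfl fun l _ => ?_
  rw [coeff_onePlus, coeff_smul, smul_eq_mul]
  ring

lemma factorial_mul_coeff_mk_div_factorial (a : ℕ → ℝ) (n : ℕ) :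
    n.factorial * coeff n (mk fun k => a k / k.factorial) = a n := by
  rw [coeff_mk, mul_div_cancel₀ _ (by positivity)]

lemma sum_mul_eq_factorial_mul_coeff_subst {ψ : ℝ⟦X⟧} (hψ : constantCoeff ψ = 0) {n : ℕ}
    {a : ℕ → ℝ} (ha : ∀ k ≤ n, a k = n.factorial * coeff n ((k.factorial : ℝ)⁻¹ • ψ ^ k))
    (c : ℕ → ℝ) :
    ∑ k ∈ range (n + 1), a k * c k =
      n.factorial * coeff n ((mk fun k => c k / k.factorial).subst ψ) := by
  rw [coeff_subst_eq_sum_range hψ, Finset.mul_sum]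
  refine Finset.sum_congr rfl fun k hk => ?_
  rw [ha k (Nat.lt_succ_iff.1 (mem_range.1 hk)), coeff_mk, coeff_smul, smul_eq_mul]
  ring

lemma sum_choose_mul_mul_eq_factorial_mul_coeff_mul (P Q : ℝ⟦X⟧) (n : ℕ) :
    ∑ k ∈ range (n + 1), (n.choose k : ℝ) * (k.factorial * coeff k P) *
      ((n - k).factorial * coeff (n - k) Q) = n.factorial * coeff n (P * Q) := by
  rw [coeff_mul, Finset.Nat.sum_antidiagonal_eq_sum_range_succ_mk, Finset.mul_sum]
  refine Finset.sum_congr rfl fun k hk => ?_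
  rw [← Nat.choose_mul_factorial_mul_factorial (Nat.lt_succ_iff.1 (mem_range.1 hk))]
  push_cast
  ring

lemma subst_changhee_eq_subst_euler_mul {lam : ℝ} (hlam : lam ≠ 0) {r : ℕ} {x : ℝ}
    {P Q : ℝ⟦X⟧} (hP : (degExp lam 1 + degExp lam (-1)) ^ r * P = 2 ^ r)
    (hQ : (onePlus 2 + 1) ^ r * Q = 2 ^ r * onePlus (x + r)) :
    Q.subst ((degExp lam 1).subst (degExp lam 1 - 1) - 1) =
      P.subst (degExp lam 1 - 1) * (degExp lam x).subst (degExp lam 1 - 1) := by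
  set g := degExp lam 1 - 1
  have hg : constantCoeff g = 0 := constantCoeff_degExp_sub_one lam
  have hg' := HasSubst.of_constantCoeff_zero' hg
  have hh := constantCoeff_subst_degExp_one_sub_one lam hg
  have hFF' : (degExp lam 1).subst g * (degExp lam (-1)).subst g = 1 := by
    rw [← subst_mul hg', ← degExp_add hlam, add_neg_cancel, degExp_zero, ← coe_substAlgHom hg',
      map_one]
  have hP' := congrArg (substAlgHom hg') hP
  have hQ' := congrArg (substAlgHom (HasSubst.of_constantCoeff_zero' hh)) hQ
  simp only [map_mul, map_pow, map_add, map_one, map_ofNat, coe_substAlgHom] at hP' hQ'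
  rw [show (2 : ℝ) = (2 : ℕ) by norm_num, subst_onePlus_natCast hh, add_sub_cancel,
    subst_onePlus_subst_degExp_sub_one hlam hg, degExp_add hlam, degExp_natCast hlam,
    subst_mul hg', subst_pow hg'] at hQ'
  set F : ℝ⟦X⟧ := (degExp lam 1).subst g
  set F' : ℝ⟦X⟧ := (degExp lam (-1)).subst g
  have hne : F ^ r * 2 ^ r ≠ 0 := by
    refine mul_ne_zero (pow_ne_zero r (left_ne_zero_of_mul_eq_one hFF')) (pow_ne_zero r ?_)
    intro h2
    have h20 := congrArg (constantCoeff (R := ℝ)) h2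
    rw [map_ofNat, map_zero] at h20
    norm_num at h20
  refine mul_left_cancel₀ hne ?_
  calc F ^ r * 2 ^ r * Q.subst (F - 1)
      = F ^ r * ((F + F') ^ r * P.subst g) * Q.subst (F - 1) := by rw [hP']
    _ = P.subst g * ((F * (F + F')) ^ r * Q.subst (F - 1)) := by rw [mul_pow]; ring
    _ = P.subst g * ((F ^ 2 + 1) ^ r * Q.subst (F - 1)) := by rw [mul_add, hFF', sq]
    _ = F ^ r * 2 ^ r * (P.subst g * (degExp lam x).subst g) := by rw [hQ']; ring

theorem stmt_12_general (lam : ℝ) (hlam : lam ≠ 0) (r : ℕ)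
    (S2 : ℕ → ℕ → ℝ)
    (hS2 : ∀ (x : ℝ) (n : ℕ), dff lam x n = ∑ l ∈ Finset.range (n + 1), S2 n l * dff 1 x l)
    (E C : ℝ → ℕ → ℝ)
    (hE : ∀ x : ℝ, (degExp lam 1 + degExp lam (-1)) ^ r *
      PowerSeries.mk (fun n => E x n / n.factorial) = 2 ^ r * degExp lam x)
    (hC : ∀ x : ℝ, (onePlus 2 + 1) ^ r *
      PowerSeries.mk (fun n => C x n / n.factorial) = 2 ^ r * onePlus (x + r))
    (SJ2 : ℕ → ℕ → ℝ)
    (hSJ2 : ∀ k : ℕ, PowerSeries.mk (fun n => SJ2 n k / n.factorial) =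
      ((k.factorial : ℝ))⁻¹ • (pcomp (degExp lam 1) (degExp lam 1 - 1) - 1) ^ k)
    (B : ℝ → ℕ → ℝ)
    (hB : ∀ x : ℝ, pcomp (degExp lam x) (degExp lam 1 - 1) =
      PowerSeries.mk (fun n => B x n / n.factorial))
    (n : ℕ) (x : ℝ) :
    ∑ k ∈ Finset.range (n + 1), SJ2 n k * C x k =
      ∑ k ∈ Finset.range (n + 1), (n.choose k : ℝ) *
        (∑ l ∈ Finset.range (k + 1), E 0 l * S2 k l) * B x (n - k) := by
  set g := degExp lam 1 - 1
  have hg : constantCoeff g = 0 := constantCoeff_degExp_sub_one lam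
  simp only [pcomp_eq_subst hg] at hSJ2 hB
  have hE0 := hE 0
  rw [degExp_zero, mul_one] at hE0
  rw [sum_mul_eq_factorial_mul_coeff_subst (constantCoeff_subst_degExp_one_sub_one lam hg)
      (fun k _ => by rw [← hSJ2 k, factorial_mul_coeff_mk_div_factorial]) (C x),
    subst_changhee_eq_subst_euler_mul hlam hE0 (hC x),
    ← sum_choose_mul_mul_eq_factorial_mul_coeff_mul]
  refine Finset.sum_congr rfl fun k _ => ?_
  simp only [mul_comm (E 0 _) (S2 k _)]
  rw [sum_mul_eq_factorial_mul_coeff_subst hg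
      (fun l hl => degStirling_eq_factorial_mul_coeff hlam (fun y => hS2 y k) hl) (E 0),
    hB, factorial_mul_coeff_mk_div_factorial]

/-- `Σ_{k=0}^n S_{J,λ}^{(2)}(n,k) C_k^{(r)}(x)
      = Σ_{k=0}^n binom(n,k) (Σ_{l=0}^k E_{l,λ}^{(r)} S_{2,λ}(k,l)) B_{n-k,λ}(x)`. -/
theorem stmt_12 (lam : ℝ) (hlam : lam ≠ 0) (r : ℕ) (hr : 1 ≤ r)
    (S2 : ℕ → ℕ → ℝ)
    (hS2 : ∀ (x : ℝ) (n : ℕ), dff lam x n = ∑ l ∈ Finset.range (n + 1), S2 n l * dff 1 x l)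
    (E C : ℝ → ℕ → ℝ)
    (hE : ∀ x : ℝ, (degExp lam 1 + degExp lam (-1)) ^ r *
      PowerSeries.mk (fun n => E x n / n.factorial) = 2 ^ r * degExp lam x)
    (hC : ∀ x : ℝ, (onePlus 2 + 1) ^ r *
      PowerSeries.mk (fun n => C x n / n.factorial) = 2 ^ r * onePlus (x + r))
    (SJ2 : ℕ → ℕ → ℝ)
    (hSJ2 : ∀ k : ℕ, PowerSeries.mk (fun n => SJ2 n k / n.factorial) =
      ((k.factorial : ℝ))⁻¹ • (pcomp (degExp lam 1) (degExp lam 1 - 1) - 1) ^ k)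
    (B : ℝ → ℕ → ℝ)
    (hB : ∀ x : ℝ, pcomp (degExp lam x) (degExp lam 1 - 1) =
      PowerSeries.mk (fun n => B x n / n.factorial))
    (n : ℕ) (x : ℝ) :
    ∑ k ∈ Finset.range (n + 1), SJ2 n k * C x k =
      ∑ k ∈ Finset.range (n + 1), (n.choose k : ℝ) *
        (∑ l ∈ Finset.range (k + 1), E 0 l * S2 k l) * B x (n - k) :=
  stmt_12_general lam hlam r S2 hS2 E C hE hC SJ2 hSJ2 B hB n x
end

section
/- Let r ≥ 0 be an integer and x a real number. For every integer n with n ≥ r, H_{n,λ}^{(r)}(x) = Σ_{k=r}^{n} (−1)^{n−k}·((x)_{n−k}/(n−k)!)·Σ_{l=r+1}^{k+1} Σ_{l_1+···+l_{r+1}=l, each l_i ≥ 1} ((−λ)^{l−r−1}/(l_1!···l_{r+1}!))·(1)_{l_1,1/λ}···(1)_{l_{r+1},1/λ}, and for every integer n with 0 ≤ n < r, H_{n,λ}^{(r)}(x) = 0. -/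
open Finset PowerSeries

/-! Because `(1 - t) ^ (x - 1) = (1 - t) ^ x * (1 - t)⁻¹`, the series `t * Σ Hₙ tⁿ` is `(1 - t) ^ x`
times the series of partial sums of `(-log_λ (1 - t)) ^ (r + 1)`. That power is divisible by
`t ^ (r + 1)`, and its `l`-th coefficient expands as a sum over compositions
`l = l₁ + ⋯ + l_{r+1}` with all `lᵢ ≥ 1`. Comparing coefficients of `t ^ (n + 1)` gives the formula;
for `n < r` the sum over `k ∈ [r, n]` is empty. -/

namespace PowerSeries

variable {R : Type*} [CommSemiring R]

theorem coeff_pow_eq_sum_antidiagonalTuple (φ : R⟦X⟧) (k n : ℕ) :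
    coeff n (φ ^ k) = ∑ f ∈ Finset.Nat.antidiagonalTuple k n, ∏ i : Fin k, coeff (f i) φ := by
  have h := coeff_prod (fun _ : Fin k => φ) n univ
  rw [prod_const, card_univ, Fintype.card_fin] at h
  rw [h, finsuppAntidiag, sum_map, ← piAntidiag_univ_fin_eq_antidiagonalTuple]
  exact sum_attach _ fun f : Fin k → ℕ => ∏ i, coeff (f i) φ

theorem coeff_mul_mk_one_eq_sum_Icc {φ : R⟦X⟧} {r : ℕ} (hφ : ∀ j ≤ r, coeff j φ = 0) (n : ℕ) :
    coeff n (φ * mk 1) = ∑ i ∈ Icc (r + 1) n, coeff i φ := by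
  have hpartial : coeff n (φ * mk 1) = ∑ i ∈ range (n + 1), coeff i φ := by
    simp [coeff_mul, Finset.Nat.sum_antidiagonal_eq_sum_range_succ_mk]
  rw [hpartial]
  refine (sum_subset (fun i hi => ?_) fun i hin hi => hφ i ?_).symm
  · simp only [mem_Icc, mem_range] at hi ⊢; omega
  · simp only [mem_Icc, mem_range, not_and, not_le] at hin hi; omega

theorem coeff_succ_mul_eq_sum_Icc {A B : R⟦X⟧} {r : ℕ} (hB : ∀ j ≤ r, coeff j B = 0) (n : ℕ) :
    coeff (n + 1) (A * B) = ∑ k ∈ Icc r n, coeff (n - k) A * coeff (k + 1) B := by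
  rw [mul_comm, coeff_mul, Finset.Nat.sum_antidiagonal_eq_sum_range_succ_mk, sum_range_succ',
    hB 0 (Nat.zero_le r), zero_mul, add_zero]
  symm
  refine sum_subset (fun k hk => ?_) (fun k hkn hk => ?_) |>.trans (sum_congr rfl fun k _ => ?_)
  · simp only [mem_Icc, mem_range] at hk ⊢; omega
  · simp only [mem_Icc, mem_range, not_and, not_le] at hkn hk
    rw [hB (k + 1) (by omega), mul_zero]
  · simp [mul_comm]

end PowerSeries

theorem dff_succ (lam y : ℝ) (n : ℕ) : dff lam y (n + 1) = dff lam y n * (y - n * lam) :=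
  prod_range_succ _ n

theorem dff_succ' (lam y : ℝ) (n : ℕ) : dff lam y (n + 1) = y * dff lam (y - lam) n := by
  simp only [dff, prod_range_succ', Nat.cast_zero, zero_mul, sub_zero, Nat.cast_succ]
  rw [mul_comm]
  congr 1
  exact prod_congr rfl fun i _ => by ring

theorem oneMinus_sub_one_mul_one_sub_X (y : ℝ) : oneMinus (y - 1) * (1 - X) = oneMinus y := by
  ext n
  rcases n with _ | n
  · simp [oneMinus, dff]
  · rw [mul_sub, mul_one, map_sub, coeff_succ_mul_X]
    simp only [oneMinus, coeff_mk]
    rw [dff_succ, dff_succ', Nat.factorial_succ]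
    push_cast
    field_simp
    ring

theorem oneMinus_sub_one (y : ℝ) : oneMinus (y - 1) = oneMinus y * PowerSeries.mk 1 := by
  rw [← oneMinus_sub_one_mul_one_sub_X y, mul_assoc, mul_comm (1 - X), mk_one_mul_one_sub_eq_one,
    mul_one]

theorem coeff_neg_degLogNeg (lam : ℝ) {m : ℕ} (hm : m ≠ 0) :
    coeff m (-degLogNeg lam) = (-lam) ^ (m - 1) * oneFall lam m / m.factorial := by
  obtain ⟨p, rfl⟩ := Nat.exists_eq_succ_of_ne_zero hm
  simp only [degLogNeg, map_neg, coeff_mk, if_neg hm, Nat.succ_sub_one, neg_pow lam, pow_succ]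
  ring

theorem constantCoeff_neg_degLogNeg (lam : ℝ) : constantCoeff (-degLogNeg lam) = 0 := by
  rw [← coeff_zero_eq_constantCoeff_apply]
  simp [degLogNeg]

theorem coeff_neg_degLogNeg_pow_of_le (lam : ℝ) {r l : ℕ} (hl : l ≤ r) :
    coeff l ((-degLogNeg lam) ^ (r + 1)) = 0 :=
  X_pow_dvd_iff.mp (pow_dvd_pow_of_dvd (X_dvd_iff.mpr (constantCoeff_neg_degLogNeg lam)) _) l
    (Nat.lt_succ_of_le hl)

theorem coeff_neg_degLogNeg_pow (lam : ℝ) (r l : ℕ) :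
    coeff l ((-degLogNeg lam) ^ (r + 1)) =
      ∑ f ∈ (Finset.Nat.antidiagonalTuple (r + 1) l).filter (fun f => ∀ i, 1 ≤ f i),
        (-lam) ^ (l - (r + 1)) / (∏ i, ((f i).factorial : ℝ)) * ∏ i, oneFall lam (f i) := by
  rw [coeff_pow_eq_sum_antidiagonalTuple,
    ← sum_filter_of_ne (p := fun f : Fin (r + 1) → ℕ => ∀ i, 1 ≤ f i) fun f _ hf i => ?_]
  · refine sum_congr rfl fun f hf => ?_
    rw [mem_filter, Finset.Nat.mem_antidiagonalTuple] at hf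
    obtain ⟨hsum, hpos⟩ := hf
    have hexp : ∑ i, (f i - 1) = l - (r + 1) := by
      rw [sum_tsub_distrib _ fun i _ => hpos i, hsum]
      simp
    rw [prod_congr rfl fun i _ => coeff_neg_degLogNeg lam (Nat.one_le_iff_ne_zero.mp (hpos i)),
      prod_div_distrib, prod_mul_distrib, prod_pow_eq_pow_sum, hexp]
    ring
  · by_contra! h
    refine hf (prod_eq_zero (mem_univ i) ?_)
    simp [Nat.lt_one_iff.mp h, degLogNeg]

theorem stmt_17_general (lam : ℝ)
    (Hp : ℕ → ℝ → ℕ → ℝ)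
    (hHp : ∀ (r : ℕ) (x : ℝ), PowerSeries.X * PowerSeries.mk (fun n => Hp r x n) =
      (- degLogNeg lam) ^ (r + 1) * oneMinus (x - 1))
    (r : ℕ) (x : ℝ) :
    (∀ n : ℕ, r ≤ n → Hp r x n =
      ∑ k ∈ Finset.Icc r n, (-1 : ℝ) ^ (n - k) * (dff 1 x (n - k) / (n - k).factorial) *
        ∑ l ∈ Finset.Icc (r + 1) (k + 1),
          ∑ f ∈ (Finset.Nat.antidiagonalTuple (r + 1) l).filter (fun f => ∀ i, 1 ≤ f i),
            (-lam) ^ (l - (r + 1)) / (∏ i, ((f i).factorial : ℝ)) *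
              ∏ i, oneFall lam (f i)) ∧
    (∀ n : ℕ, n < r → Hp r x n = 0) := by
  have hlow : ∀ l ≤ r, coeff l ((-degLogNeg lam) ^ (r + 1)) = 0 :=
    fun _ => coeff_neg_degLogNeg_pow_of_le lam
  have hpartial (j : ℕ) (hj : j ≤ r) :
      coeff j ((-degLogNeg lam) ^ (r + 1) * PowerSeries.mk 1) = 0 := by
    rw [coeff_mul_mk_one_eq_sum_Icc hlow, Icc_eq_empty (by omega), sum_empty]
  have hHp_eq (n : ℕ) : Hp r x n =
      ∑ k ∈ Icc r n, (-1 : ℝ) ^ (n - k) * (dff 1 x (n - k) / (n - k).factorial) *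
        ∑ l ∈ Icc (r + 1) (k + 1), coeff l ((-degLogNeg lam) ^ (r + 1)) := by
    have h := congrArg (coeff (n + 1)) (hHp r x)
    rw [coeff_succ_X_mul, coeff_mk, oneMinus_sub_one, mul_left_comm,
      coeff_succ_mul_eq_sum_Icc hpartial] at h
    rw [h]
    refine sum_congr rfl fun k _ => ?_
    rw [coeff_mul_mk_one_eq_sum_Icc hlow, oneMinus, coeff_mk]
    ring
  refine ⟨fun n _ => ?_, fun n hn => ?_⟩
  · simp only [hHp_eq, coeff_neg_degLogNeg_pow]
  · rw [hHp_eq, Icc_eq_empty (by omega), sum_empty]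

/-- Explicit expression for the degenerate harmonic polynomials of order `r`:
`H_{n,λ}^{(r)}(x) = Σ_{k=r}^{n} (-1)^{n-k} ((x)_{n-k}/(n-k)!) Σ_{l=r+1}^{k+1}
  Σ_{l₁+⋯+l_{r+1}=l, lᵢ≥1} ((-λ)^{l-r-1}/(l₁!⋯l_{r+1}!)) (1)_{l₁,1/λ} ⋯ (1)_{l_{r+1},1/λ}`
for `n ≥ r`, and `H_{n,λ}^{(r)}(x) = 0` for `n < r`. -/
theorem stmt_17 (lam : ℝ) (hlam : lam ≠ 0)
    (Hp : ℕ → ℝ → ℕ → ℝ)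
    (hHp : ∀ (r : ℕ) (x : ℝ), PowerSeries.X * PowerSeries.mk (fun n => Hp r x n) =
      (- degLogNeg lam) ^ (r + 1) * oneMinus (x - 1))
    (r : ℕ) (x : ℝ) :
    (∀ n : ℕ, r ≤ n → Hp r x n =
      ∑ k ∈ Finset.Icc r n, (-1 : ℝ) ^ (n - k) * (dff 1 x (n - k) / (n - k).factorial) *
        ∑ l ∈ Finset.Icc (r + 1) (k + 1),
          ∑ f ∈ (Finset.Nat.antidiagonalTuple (r + 1) l).filter (fun f => ∀ i, 1 ≤ f i),
            (-lam) ^ (l - (r + 1)) / (∏ i, ((f i).factorial : ℝ)) *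
              ∏ i, oneFall lam (f i)) ∧
    (∀ n : ℕ, n < r → Hp r x n = 0) :=
  stmt_17_general lam Hp hHp r x
end
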